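/- Let n ≥ 3 be odd and let A be the GDN matrix of the previous construction (bidiagonal with corner entry ε, d_n = 0, all eigenvalues positive and distinct). Then the exponential polynomial p(α) = (A^α)_{nn} satisfies p(α) < 0 for all α ∈ (n−2, n−1). In particular the GDN critical exponent for n×n matrices is at least n−1. -/

import Mathlib

open Matrix

/-- The continuous power `A^α := S * D^α * S⁻¹` of a diagonalizable matrix
`A = S * diagonal e * S⁻¹`. -/
noncomputable def contPow {n : ℕ} (S : Matrix (Fin n) (Fin n) ℝ) (e : Fin n → ℝ) (α : ℝ) :
    Matrix (Fin n) (Fin n) ℝ :=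
  S * Matrix.diagonal (fun i => e i ^ α) * S⁻¹

/-!
Write `L` for the last index and `b j = S L j * S⁻¹ j L`, so that `(A^α)_{LL} = ∑ j, b j * e j ^ α`.
Since `A` vanishes above its superdiagonal and its last row is `ε` times the first unit vector,
`(A^k)_{LL} = 0^k` for `k < n`: on polynomials of degree `< n` the functional
`g ↦ ∑ j, b j * g (e j)` is evaluation at `0`. Applied to the interpolant `Q` of `x ↦ x^α` at the
nodes `e j` this gives `(A^α)_{LL} = Q 0`. By the Cauchy form of the interpolation error at the
point `0`, which lies left of all nodes, `0^α - Q 0 = α(α-1)⋯(α-n+1) ξ^(α-n) / n! * ∏ j, (0 - e j)`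
for some `ξ > 0`; for `α ∈ (n-2, n-1)` exactly one factor of `α(α-1)⋯(α-n+1)` is negative, and
the product `∏ j, (0 - e j)` is negative because `n` is odd.
-/

open Set Finset Polynomial
open scoped Nat

theorem exists_finset_deriv_eq_zero {f : ℝ → ℝ} {I : Set ℝ} (hI : I.OrdConnected)
    (hf : ContinuousOn f I) {s : Finset ℝ} (hsI : ↑s ⊆ I) (hs : ∀ x ∈ s, f x = 0) :
    ∃ t : Finset ℝ, #s ≤ #t + 1 ∧
      ∀ ξ ∈ t, deriv f ξ = 0 ∧ ∃ x ∈ s, ∃ y ∈ s, x < ξ ∧ ξ < y := by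
  have rolle : ∀ p : ℝ × ℝ, ∃ ξ, p.1 ∈ s → p.2 ∈ s → p.1 < p.2 →
      ξ ∈ Ioo p.1 p.2 ∧ deriv f ξ = 0 := fun ⟨x, y⟩ => by
    by_cases h : x ∈ s ∧ y ∈ s ∧ x < y
    · obtain ⟨hx, hy, hxy⟩ := h
      obtain ⟨ξ, hξ, hξ'⟩ := exists_deriv_eq_zero hxy
        (hf.mono (hI.out (hsI hx) (hsI hy))) ((hs x hx).trans (hs y hy).symm)
      exact ⟨ξ, fun _ _ _ => ⟨hξ, hξ'⟩⟩
    · exact ⟨0, fun hx hy hxy => (h ⟨hx, hy, hxy⟩).elim⟩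
  choose g hg using rolle
  refine ⟨{p ∈ s ×ˢ s | p.1 < p.2}.image g, card_le_of_interleaved fun x hx y hy hxy _ => ?_, ?_⟩
  · exact ⟨g (x, y), mem_image_of_mem _ (by simp [hx, hy, hxy]), hg (x, y) hx hy hxy |>.1⟩
  · rintro _ hξ
    obtain ⟨⟨x, y⟩, hp, rfl⟩ := mem_image.mp hξ
    obtain ⟨hxy', hxy⟩ := mem_filter.mp hp
    obtain ⟨hx, hy⟩ := mem_product.mp hxy'
    obtain ⟨⟨hxξ, hξy⟩, hξ⟩ := hg (x, y) hx hy hxy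
    exact ⟨hξ, x, hx, y, hy, hxξ, hξy⟩

theorem exists_iterate_deriv_eq_zero {I : Set ℝ} (hI : I.OrdConnected) {m : ℕ} {f : ℝ → ℝ}
    (hf : ∀ k < m, ContinuousOn (deriv^[k] f) I) {s : Finset ℝ} (hsI : ↑s ⊆ I)
    (hs : ∀ x ∈ s, f x = 0) (hm : m < #s) : ∃ ξ ∈ I, deriv^[m] f ξ = 0 := by
  induction m generalizing f s with
  | zero =>
    obtain ⟨x, hx⟩ := card_pos.mp hm
    exact ⟨x, hsI hx, hs x hx⟩
  | succ m ih =>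
    obtain ⟨t, hst, ht⟩ := exists_finset_deriv_eq_zero hI (hf 0 m.succ_pos) hsI hs
    have htI : ↑t ⊆ I := fun ξ hξ => by
      obtain ⟨-, x, hx, y, hy, hxξ, hξy⟩ := ht ξ hξ
      exact hI.out (hsI hx) (hsI hy) ⟨hxξ.le, hξy.le⟩
    exact ih (fun k hk => hf (k + 1) (by omega)) htI (fun ξ hξ => (ht ξ hξ).1) (by omega)

theorem exists_gt_iterate_deriv_eq_zero {a : ℝ} {m : ℕ} {f : ℝ → ℝ}
    (hf : ContinuousOn f (Ici a)) (hf' : ∀ k < m, ContinuousOn (deriv^[k] f) (Ioi a))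
    {s : Finset ℝ} (hsa : ∀ x ∈ s, a ≤ x) (hs : ∀ x ∈ s, f x = 0) (hm₀ : 0 < m)
    (hm : m < #s) : ∃ ξ, a < ξ ∧ deriv^[m] f ξ = 0 := by
  obtain ⟨t, hst, ht⟩ := exists_finset_deriv_eq_zero ordConnected_Ici hf hsa hs
  obtain ⟨k, rfl⟩ := Nat.exists_eq_add_of_lt hm₀
  have hta : ∀ ξ ∈ t, a < ξ := fun ξ hξ => by
    obtain ⟨-, x, hx, -, -, hxξ, -⟩ := ht ξ hξ
    exact (hsa x hx).trans_lt hxξ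
  obtain ⟨ξ, hξ, hξ'⟩ := exists_iterate_deriv_eq_zero ordConnected_Ioi (m := k) (f := deriv f)
    (fun j hj => hf' (j + 1) (by omega)) hta (fun ξ hξ => (ht ξ hξ).1) (by omega)
  exact ⟨ξ, hξ, by rwa [zero_add, Function.iterate_succ_apply]⟩

theorem ContDiffOn.differentiableOn_iterate_deriv {f : ℝ → ℝ} {U : Set ℝ} (hU : IsOpen U)
    {N : ℕ} (hf : ContDiffOn ℝ N f U) {k : ℕ} (hk : k < N) :
    DifferentiableOn ℝ (deriv^[k] f) U := by
  rw [← iteratedDeriv_eq_iterate]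
  exact (hf.differentiableOn_iteratedDerivWithin (mod_cast hk) hU.uniqueDiffOn).congr
    fun x hx => (iteratedDerivWithin_of_isOpen hU hx).symm

theorem iterate_deriv_sub_eval_eqOn {f : ℝ → ℝ} {U : Set ℝ} (hU : IsOpen U) {N : ℕ}
    (hf : ∀ k < N, DifferentiableOn ℝ (deriv^[k] f) U) (p : ℝ[X]) {k : ℕ} (hk : k ≤ N) :
    EqOn (deriv^[k] fun x => f x - p.eval x)
      (fun x => deriv^[k] f x - (derivative^[k] p).eval x) U := by
  induction k with
  | zero => exact fun _ _ => rfl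
  | succ k ih =>
    intro x hx
    have hfx := (hf k (by omega)).differentiableAt (hU.mem_nhds hx)
    simp only [Function.iterate_succ_apply']
    rw [((ih (by omega)).eventuallyEq_of_mem (hU.mem_nhds hx)).deriv_eq,
      deriv_fun_sub hfx (Polynomial.differentiableAt _), Polynomial.deriv]

theorem exists_sub_eval_interpolate_eq {f : ℝ → ℝ} {a : ℝ} {s : Finset ℝ} (hs : s.Nonempty)
    (has : ∀ x ∈ s, a < x) (hf : ContinuousOn f (Ici a)) (hf' : ContDiffOn ℝ #s f (Ioi a)) :
    ∃ ξ, a < ξ ∧ f a - (Lagrange.interpolate s id f).eval a =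
      iteratedDeriv #s f ξ / (#s)! * ∏ x ∈ s, (a - x) := by
  set Q := Lagrange.interpolate s id f
  set ω := Lagrange.nodal s id
  have hω : ω.eval a = ∏ x ∈ s, (a - x) := Lagrange.eval_nodal
  have hω₀ : ω.eval a ≠ 0 := by
    rw [hω]
    exact prod_ne_zero_iff.mpr fun x hx => sub_ne_zero.mpr (has x hx).ne
  -- `c` is chosen so that `f - (Q + c ω)` vanishes at `a` as well as at the nodes.
  set c := (f a - Q.eval a) / ω.eval a
  set P := Q + C c * ω
  have hK : ∀ x ∈ insert a s, f x - P.eval x = 0 := by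
    refine Finset.forall_mem_insert _ _ _ |>.mpr ⟨?_, fun x hx => ?_⟩
    · simp only [P, c, eval_add, eval_mul, eval_C]
      field_simp
      ring
    · have hQ : Q.eval x = f x := Lagrange.eval_interpolate_at_node (v := id) f (injOn_id _) hx
      have hωx : ω.eval x = 0 := Lagrange.eval_nodal_at_node (v := id) hx
      simp [P, hQ, hωx]
  have hP : derivative^[#s] P = C ((#s)! * c) := by
    rw [iterate_map_add, iterate_derivative_eq_zero_of_degree_lt
      (Lagrange.degree_interpolate_lt f (injOn_id _)), iterate_derivative_C_mul,
      show ω = ∏ x ∈ s, (X - C x) from Lagrange.nodal_eq s id,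
      iterate_derivative_prod_X_sub_C le_rfl]
    simp [mul_comm]
  have hdf := fun k (hk : k < #s) => hf'.differentiableOn_iterate_deriv isOpen_Ioi hk
  have hKeq := fun k (hk : k ≤ #s) => iterate_deriv_sub_eval_eqOn isOpen_Ioi hdf P hk
  have hKcont : ∀ k < #s, ContinuousOn (deriv^[k] fun x => f x - P.eval x) (Ioi a) := fun k hk =>
    ((hdf k hk).continuousOn.sub (derivative^[k] P).continuous.continuousOn).congr (hKeq k hk.le)
  obtain ⟨ξ, hξ, hξ₀⟩ := exists_gt_iterate_deriv_eq_zero (f := fun x => f x - P.eval x)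
    (hf.sub P.continuousOn) hKcont
    (by simpa using fun x hx => (has x hx).le) hK (card_pos.mpr hs)
    (by rw [card_insert_of_notMem fun ha => (has a ha).false]; omega)
  refine ⟨ξ, hξ, ?_⟩
  have hξ₁ : deriv^[#s] f ξ = (#s)! * c := by
    have := hKeq _ le_rfl hξ
    simp only [hξ₀, hP, eval_C] at this
    linarith
  rw [iteratedDeriv_eq_iterate, hξ₁, ← hω, mul_div_cancel_left₀ _ (by positivity),
    div_mul_cancel₀ _ hω₀]

theorem descPochhammer_succ_eval_neg {S : Type*} [Ring S] [PartialOrder S] [IsStrictOrderedRing S]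
    {n : ℕ} {s : S} (h₁ : (n : S) - 1 < s) (h₂ : s < n) :
    (descPochhammer S (n + 1)).eval s < 0 := by
  rw [descPochhammer_succ_eval]
  exact mul_neg_of_pos_of_neg (descPochhammer_pos h₁) (sub_neg.mpr h₂)

theorem eval_zero_interpolate_rpow_neg {s : Finset ℝ} (hs : ∀ x ∈ s, 0 < x) (hodd : Odd #s)
    {α : ℝ} (hα₀ : 0 < α) (hα₁ : (#s : ℝ) - 2 < α) (hα₂ : α < #s - 1) :
    (Lagrange.interpolate s id (· ^ α)).eval 0 < 0 := by
  obtain ⟨ξ, hξ, hrem⟩ := exists_sub_eval_interpolate_eq (card_pos.mp hodd.pos) hs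
    (Real.continuous_rpow_const hα₀.le).continuousOn
    fun x hx => (Real.contDiffAt_rpow_const_of_ne (ne_of_gt hx)).contDiffWithinAt
  obtain ⟨m, hm⟩ : ∃ m, #s = m + 1 := ⟨#s - 1, by have := hodd.pos; omega⟩
  have hD : (descPochhammer ℝ #s).eval α < 0 := by
    rw [hm] at hα₁ hα₂ ⊢
    push_cast at hα₁ hα₂
    exact descPochhammer_succ_eval_neg (by linarith) (by linarith)
  have hprod : ∏ x ∈ s, (0 - x) = -∏ x ∈ s, x := by
    rw [prod_congr rfl fun x _ => zero_sub x, prod_neg, hodd.neg_one_pow, neg_one_mul]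
  rw [Real.zero_rpow hα₀.ne', iteratedDeriv_eq_iterate, Real.iter_deriv_rpow_const, hprod] at hrem
  have hξα : 0 < ξ ^ (α - #s) := Real.rpow_pos_of_pos hξ _
  have : 0 < (descPochhammer ℝ #s).eval α * ξ ^ (α - #s) / (#s)! * -∏ x ∈ s, x :=
    mul_pos_of_neg_of_neg (div_neg_of_neg_of_pos (mul_neg_of_neg_of_pos hD hξα) (by positivity))
      (neg_neg_of_pos (prod_pos hs))
  linarith

theorem sum_mul_eval_eq_eval_zero {R ι : Type*} [CommSemiring R] [Fintype ι] {N : ℕ}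
    {b e : ι → R} (hmom : ∀ k < N, ∑ j, b j * e j ^ k = 0 ^ k) {p : R[X]}
    (hp : p.natDegree < N) : ∑ j, b j * p.eval (e j) = p.eval 0 :=
  calc ∑ j, b j * p.eval (e j) = ∑ k ∈ range N, p.coeff k * ∑ j, b j * e j ^ k := by
        simp_rw [eval_eq_sum_range' hp, mul_sum]
        rw [sum_comm]
        exact sum_congr rfl fun k _ => sum_congr rfl fun j _ => by ring
    _ = ∑ k ∈ range N, p.coeff k * 0 ^ k :=
        sum_congr rfl fun k hk => by rw [hmom k (mem_range.mp hk)]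
    _ = p.eval 0 := (eval_eq_sum_range' hp 0).symm

theorem sum_mul_rpow_neg_of_moments {ι : Type*} [Fintype ι] {b e : ι → ℝ} (he : ∀ i, 0 < e i)
    (hinj : Function.Injective e) (hodd : Odd (Fintype.card ι))
    (hmom : ∀ k < Fintype.card ι, ∑ j, b j * e j ^ k = 0 ^ k) {α : ℝ} (hα₀ : 0 < α)
    (hα₁ : (Fintype.card ι : ℝ) - 2 < α) (hα₂ : α < Fintype.card ι - 1) :
    ∑ j, b j * e j ^ α < 0 := by
  classical
  set s := Finset.univ.image e
  have hs : #s = Fintype.card ι := card_image_of_injective _ hinj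
  set Q := Lagrange.interpolate s id (· ^ α)
  have hQ : ∀ j, Q.eval (e j) = e j ^ α := fun j =>
    Lagrange.eval_interpolate_at_node (v := id) _ (injOn_id _) (mem_image_of_mem e (mem_univ j))
  have hdeg : Q.natDegree < Fintype.card ι := by
    rcases eq_or_ne Q 0 with h | h
    · simpa [h] using hodd.pos
    · exact (natDegree_lt_iff_degree_lt h).mpr (hs ▸ Lagrange.degree_interpolate_lt _ (injOn_id _))
  simp_rw [← hQ, sum_mul_eval_eq_eval_zero hmom hdeg]
  exact eval_zero_interpolate_rpow_neg (by simpa [s] using he) (hs ▸ hodd) hα₀ (hs ▸ hα₁) (hs ▸ hα₂)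

theorem Matrix.conj_pow_of_isUnit_det {ι R : Type*} [Fintype ι] [DecidableEq ι] [CommRing R]
    {S : Matrix ι ι R} (hS : IsUnit S.det) (M : Matrix ι ι R) (k : ℕ) :
    (S * M * S⁻¹) ^ k = S * M ^ k * S⁻¹ :=
  Units.conj_pow (S.nonsingInvUnit hS) M k

theorem Matrix.mul_diagonal_mul_apply {ι R : Type*} [Fintype ι] [DecidableEq ι] [CommSemiring R]
    (A B : Matrix ι ι R) (d : ι → R) (i l : ι) :
    (A * diagonal d * B) i l = ∑ j, A i j * d j * B j l := by
  rw [Matrix.mul_apply]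
  simp_rw [Matrix.mul_diagonal]

theorem Matrix.pow_succ_apply_eq_zero_of_lt {R : Type*} [Semiring R] {n : ℕ}
    {A : Matrix (Fin n) (Fin n) R} (hA : ∀ i j : Fin n, (i : ℕ) + 1 < j → A i j = 0)
    {r : Fin n} (hr : ∀ j : Fin n, 0 < (j : ℕ) → A r j = 0) {k : ℕ} {j : Fin n}
    (hkj : k < j) : (A ^ (k + 1)) r j = 0 := by
  induction k generalizing j with
  | zero => simpa using hr j hkj
  | succ k ih =>
    rw [pow_succ, Matrix.mul_apply]
    refine sum_eq_zero fun m _ => ?_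
    rcases lt_or_ge k m with hkm | hmk
    · rw [ih hkm, zero_mul]
    · rw [hA m j (by omega), mul_zero]

/-- For odd `n ≥ 3` and the bidiagonal-plus-corner GDN matrix `A = S * diagonal e * S⁻¹`
(with positive distinct eigenvalues `e`), the entry `(A^α)_{nn}` is negative for all
`α ∈ (n-2, n-1)`.  In particular the GDN critical exponent for `n × n` matrices is at
least `n - 1`. -/
theorem bidiagonal_corner_negative_entry {n : ℕ} (hn : 3 ≤ n) (hodd : Odd n)
    (d : ℕ → ℝ) (ε : ℝ)
    (hlast : d (n - 1) = 0)
    (A : Matrix (Fin n) (Fin n) ℝ)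
    (hAdef : ∀ i j : Fin n, A i j =
      if (i : ℕ) = (j : ℕ) then d i
      else if (j : ℕ) = (i : ℕ) + 1 then ε
      else if (i : ℕ) = n - 1 ∧ (j : ℕ) = 0 then ε
      else 0)
    (S : Matrix (Fin n) (Fin n) ℝ) (e : Fin n → ℝ)
    (he : ∀ i, 0 < e i) (hinj : Function.Injective e)
    (hS : IsUnit S.det)
    (hdiag : A = S * Matrix.diagonal e * S⁻¹) :
    ∀ α : ℝ, (n : ℝ) - 2 < α → α < (n : ℝ) - 1 →
      contPow S e α ⟨n - 1, by omega⟩ ⟨n - 1, by omega⟩ < 0 := by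
  intro α hα₁ hα₂
  set L : Fin n := ⟨n - 1, by omega⟩
  set b : Fin n → ℝ := fun j => S L j * S⁻¹ j L
  have hentry (w : Fin n → ℝ) : (S * diagonal w * S⁻¹) L L = ∑ j, b j * w j :=
    (Matrix.mul_diagonal_mul_apply _ _ _ _ _).trans (sum_congr rfl fun j _ => by ring)
  have hHess (i j : Fin n) (hij : (i : ℕ) + 1 < j) : A i j = 0 := by
    rw [hAdef]; split_ifs <;> first | rfl | omega
  have hrow (j : Fin n) (hj : 0 < (j : ℕ)) : A L j = 0 := by
    have hL : (L : ℕ) = n - 1 := rfl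
    rw [hAdef]
    split_ifs
    · rw [hL, hlast]
    all_goals first | rfl | omega
  have hmom : ∀ k < n, ∑ j, b j * e j ^ k = 0 ^ k := by
    intro k hk
    have hAk : ∑ j, b j * e j ^ k = (A ^ k) L L := by
      rw [hdiag, Matrix.conj_pow_of_isUnit_det hS, diagonal_pow, hentry]; rfl
    rcases k with _ | k
    · rw [hAk, pow_zero, pow_zero, Matrix.one_apply_eq]
    · rw [hAk, Matrix.pow_succ_apply_eq_zero_of_lt hHess hrow (by simp [L]; omega),
        zero_pow k.succ_ne_zero]
  have hα₀ : 0 < α := by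
    have : (3 : ℝ) ≤ n := by exact_mod_cast hn
    linarith
  rw [contPow, hentry]
  exact sum_mul_rpow_neg_of_moments he hinj (by simpa using hodd) (by simpa using hmom) hα₀
    (by simpa using hα₁) (by simpa using hα₂)
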